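/- arXiv:1808.09003 — 2 statements merged into one kernel-verified Lean document; each statement's English description precedes it below -/
import Mathlib

section
/- In a (possibly noncommutative) ring R of prime characteristic p, for any element a the p-th power of the inner derivation δ_a(b) = ba - ab equals the inner derivation of a^p; that is, δ_a^p(b) = b·a^p - a^p·b for all b in R. -/
/-!
Write `δ_a = R_a - L_a` with `L_a`, `R_a` left and right multiplication by `a`, viewed in the
endomorphism ring `End_ℤ(R)`. That ring embeds `R` via `L`, so it has characteristic `p`,
and `L_a`, `R_a` commute by associativity. Freshman's dream then gives
`δ_a ^ p = R_a ^ p - L_a ^ p = R_{a^p} - L_{a^p} = δ_{a^p}`.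
-/

open LinearMap

theorem Module.End.charP_of_algebra (S : Type*) {A : Type*} [CommSemiring S] [Semiring A]
    [Algebra S A] (p : ℕ) [CharP A p] : CharP (Module.End S A) p :=
  charP_of_injective_ringHom (f := (Algebra.lmul S A).toRingHom) Algebra.lmul_injective p

theorem mulRight_sub_mulLeft_pow_char {R : Type*} [Ring R] (p : ℕ) [Fact p.Prime] [CharP R p]
    (a : R) : (mulRight ℤ a - mulLeft ℤ a) ^ p = mulRight ℤ (a ^ p) - mulLeft ℤ (a ^ p) := by
  have := Module.End.charP_of_algebra ℤ (A := R) p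
  rw [sub_pow_char_of_commute p (commute_mulLeft_right a a).symm, pow_mulRight, pow_mulLeft]

/-- In a ring `R` of prime characteristic `p`, the `p`-th iterate of the inner
derivation `δ_a (b) = b * a - a * b` is the inner derivation of `a ^ p`. -/
theorem inner_derivation_pow_char {R : Type*} [Ring R] (p : ℕ) [Fact p.Prime]
    [CharP R p] (a b : R) :
    (fun c : R => c * a - a * c)^[p] b = b * a ^ p - a ^ p * b := by
  have hδ : (fun c : R => c * a - a * c) = ⇑(mulRight ℤ a - mulLeft ℤ a) := rfl
  rw [hδ, ← Module.End.pow_apply, mulRight_sub_mulLeft_pow_char]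
  rfl
end

section
/- Let A = k[x][y; δ] be a differential operator ring with δ(x) = p(x) ∈ k[x], and let φ be defined on generators by φ(x) = λx + κ and φ(y) = μy + h(x) with λ, μ ∈ k^×, κ ∈ k, h(x) ∈ k[x]. Then φ extends to an algebra endomorphism of A if and only if p(λx + κ) = λμ·p(x). -/
open FreeAlgebra Polynomial

/-- The defining relation of `A = k[x][y;δ]` with `δ(x) = p(x)`:
`y·x = x·y + p(x)` (generators `0 ↦ x`, `1 ↦ y`). -/
inductive DiffOpRel (k : Type*) [CommRing k] (p : Polynomial k) :
    FreeAlgebra k (Fin 2) → FreeAlgebra k (Fin 2) → Prop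
  | rel : DiffOpRel k p (ι k 1 * ι k 0)
      (ι k 0 * ι k 1 + Polynomial.aeval (ι k 0) p)

/-- The differential operator ring `k[x][y;δ]`, `δ(x) = p(x)`. -/
abbrev DiffOpRing (k : Type*) [CommRing k] (p : Polynomial k) :=
  RingQuot (DiffOpRel k p)

/-!
Both directions reduce to the single relation `y·x = x·y + p(x)`: an assignment of the
generators extends to an algebra map exactly when the images satisfy it. Commuting `y` past a
polynomial `q(x)` produces the derivation term `p(x)·q'(x)`, so for `q = λx + κ` the image
relation reads `λμ·p(x) = p(λx + κ)` in `A`. Finally `k[x] → A` is injective, as one sees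
by letting `A` act on `k[x]` with `x` acting by multiplication and `y` by `p·d/dx`.
-/

namespace DiffOpRing

variable {k : Type*} [CommRing k] (p : k[X])

noncomputable def x : DiffOpRing k p := RingQuot.mkAlgHom k (DiffOpRel k p) (ι k 0)

noncomputable def y : DiffOpRing k p := RingQuot.mkAlgHom k (DiffOpRel k p) (ι k 1)

theorem y_mul_x : y p * x p = x p * y p + aeval (x p) p := by
  unfold x y
  simpa only [map_mul, map_add, ← aeval_algHom_apply] using
    RingQuot.mkAlgHom_rel k (DiffOpRel.rel (k := k) (p := p))

theorem y_mul_aeval_x (f : k[X]) :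
    y p * aeval (x p) f = aeval (x p) f * y p + aeval (x p) (p * derivative f) := by
  have leibniz : ∀ f g : k[X],
      y p * aeval (x p) f = aeval (x p) f * y p + aeval (x p) (p * derivative f) →
      y p * aeval (x p) g = aeval (x p) g * y p + aeval (x p) (p * derivative g) →
      y p * aeval (x p) (f * g) =
        aeval (x p) (f * g) * y p + aeval (x p) (p * derivative (f * g)) := by
    intro f g hf hg
    rw [map_mul, ← mul_assoc, hf, add_mul, mul_assoc, hg, mul_add, ← mul_assoc, ← map_mul,
      ← map_mul, ← map_mul, add_assoc, ← map_add, derivative_mul]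
    congr 3
    ring
  induction f using Polynomial.induction_on with
  | C a => simp [Algebra.commutes]
  | add f g hf hg => simp only [map_add, mul_add, add_mul, hf, hg]; abel
  | monomial n a ih =>
    rw [pow_succ, ← mul_assoc]
    exact leibniz _ _ ih (by simpa using y_mul_x p)

variable {p} {A : Type*} [Semiring A] [Algebra k A]

noncomputable def lift (a b : A) (hab : b * a = a * b + aeval a p) : DiffOpRing k p →ₐ[k] A :=
  RingQuot.liftAlgHom k ⟨FreeAlgebra.lift k ![a, b], by
    rintro _ _ ⟨⟩
    simpa only [map_mul, map_add, lift_ι_apply, Matrix.cons_val_zero, Matrix.cons_val_one,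
      ← aeval_algHom_apply] using hab⟩

theorem lift_x (a b : A) (hab : b * a = a * b + aeval a p) : lift a b hab (x p) = a := by
  simp [lift, x]

theorem lift_y (a b : A) (hab : b * a = a * b + aeval a p) : lift a b hab (y p) = b := by
  simp [lift, y]

theorem exists_algHom_iff (a b : A) :
    (∃ φ : DiffOpRing k p →ₐ[k] A, φ (x p) = a ∧ φ (y p) = b) ↔ b * a = a * b + aeval a p := by
  refine ⟨?_, fun hab => ⟨lift a b hab, lift_x a b hab, lift_y a b hab⟩⟩
  rintro ⟨φ, rfl, rfl⟩
  simpa only [map_mul, map_add, aeval_algHom_apply] using congrArg φ (y_mul_x p)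

variable (p)

noncomputable def toEnd : DiffOpRing k p →ₐ[k] Module.End k k[X] :=
  lift (Algebra.lmul k k[X] X) (Algebra.lmul k k[X] p * derivative) <| by
    rw [aeval_algHom_apply, aeval_X_left_apply]
    refine LinearMap.ext fun f => ?_
    simp only [Module.End.mul_apply, LinearMap.add_apply, Algebra.coe_lmul_eq_mul,
      LinearMap.mul_apply', derivative_mul, derivative_X]
    ring

theorem toEnd_aeval_x (f : k[X]) : toEnd p (aeval (x p) f) = Algebra.lmul k k[X] f := by
  rw [← aeval_algHom_apply, toEnd, lift_x, aeval_algHom_apply, aeval_X_left_apply]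

theorem aeval_x_injective : Function.Injective (aeval (R := k) (x p)) := fun f g hfg => by
  simpa [toEnd_aeval_x, Algebra.coe_lmul_eq_mul] using congrArg (fun φ => toEnd p φ 1) hfg

theorem smul_y_add_aeval_x_mul_aeval_x (mu : k) (h q : k[X]) :
    (mu • y p + aeval (x p) h) * aeval (x p) q =
      aeval (x p) q * (mu • y p + aeval (x p) h) + aeval (x p) (mu • (p * derivative q)) := by
  rw [add_mul, mul_add, smul_mul_assoc, mul_smul_comm, y_mul_aeval_x, ← map_mul, ← map_mul,
    mul_comm h, map_smul, smul_add]
  abel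

end DiffOpRing

theorem diffOp_endomorphism_iff_general (k : Type*) [Field k] (p : Polynomial k)
    (lam mu : k) (kap : k) (h : Polynomial k) :
    (∃ φ : DiffOpRing k p →ₐ[k] DiffOpRing k p,
      φ (RingQuot.mkAlgHom k (DiffOpRel k p) (ι k 0)) =
        lam • RingQuot.mkAlgHom k (DiffOpRel k p) (ι k 0) +
          algebraMap k (DiffOpRing k p) kap ∧
      φ (RingQuot.mkAlgHom k (DiffOpRel k p) (ι k 1)) =
        mu • RingQuot.mkAlgHom k (DiffOpRel k p) (ι k 1) +
          Polynomial.aeval (RingQuot.mkAlgHom k (DiffOpRel k p) (ι k 0)) h) ↔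
    p.comp (Polynomial.C lam * Polynomial.X + Polynomial.C kap) =
      (lam * mu) • p := by
  change (∃ φ : DiffOpRing k p →ₐ[k] DiffOpRing k p,
      φ (DiffOpRing.x p) = lam • DiffOpRing.x p + algebraMap k _ kap ∧
        φ (DiffOpRing.y p) = mu • DiffOpRing.y p + aeval (DiffOpRing.x p) h) ↔ _
  have hx : lam • DiffOpRing.x p + algebraMap k _ kap =
      aeval (DiffOpRing.x p) (C lam * X + C kap) := by
    simp [Algebra.smul_def]
  have hcoeff : mu • (p * derivative (C lam * X + C kap)) = (lam * mu) • p := by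
    rw [derivative_add, derivative_C_mul_X, derivative_C, add_zero, smul_eq_C_mul, smul_eq_C_mul,
      C_mul]
    ring
  rw [hx, DiffOpRing.exists_algHom_iff, DiffOpRing.smul_y_add_aeval_x_mul_aeval_x, hcoeff,
    ← aeval_comp, add_right_inj, (DiffOpRing.aeval_x_injective p).eq_iff, eq_comm]

/-- For `A = k[x][y;δ]` with `δ(x) = p(x)`, the assignment
`x ↦ λx + κ`, `y ↦ μy + h(x)` extends to an algebra endomorphism of `A`
if and only if `p(λx + κ) = λμ·p(x)`. -/
theorem diffOp_endomorphism_iff (k : Type*) [Field k] (p : Polynomial k)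
    (lam mu : k) (hlam : lam ≠ 0) (hmu : mu ≠ 0) (kap : k) (h : Polynomial k) :
    (∃ φ : DiffOpRing k p →ₐ[k] DiffOpRing k p,
      φ (RingQuot.mkAlgHom k (DiffOpRel k p) (ι k 0)) =
        lam • RingQuot.mkAlgHom k (DiffOpRel k p) (ι k 0) +
          algebraMap k (DiffOpRing k p) kap ∧
      φ (RingQuot.mkAlgHom k (DiffOpRel k p) (ι k 1)) =
        mu • RingQuot.mkAlgHom k (DiffOpRel k p) (ι k 1) +
          Polynomial.aeval (RingQuot.mkAlgHom k (DiffOpRel k p) (ι k 0)) h) ↔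
    p.comp (Polynomial.C lam * Polynomial.X + Polynomial.C kap) =
      (lam * mu) • p :=
  diffOp_endomorphism_iff_general k p lam mu kap h
end
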